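/- Let n ≥ 1 and L, r > 0, and let X_1, …, X_n be independent random variables each uniformly distributed on [0, L]. Form the random graph G(n, L) on vertex set {X_1, …, X_n} with an edge between X_i and X_j (i ≠ j) whenever |X_i − X_j| ≤ r. Then the probability that G(n, L) is connected (i.e., has exactly one connected component) equals ∑_{i=0}^{k_1} (−1)^i · C(n−1, i) · (1 − i r / L)^n, where k_1 = min(n − 1, ⌊L/r⌋) and C(·,·) denotes the binomial coefficient. Equivalently, the probability (with respect to the uniform product measure on [0,L]^n) that every gap between consecutive order statistics of X_1, …, X_n is at most r equals this sum. -/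

import Mathlib

/-!
Connectivity is a property of the order statistics `x ∘ Tuple.sort x` alone. Off the null set of
tuples with a repeated entry, `ℝⁿ` is the disjoint union of the `n!` congruent pieces
`(· ∘ σ) ⁻¹' {strictly increasing}`, so the volume of the event is `n!` times the volume of
its increasing part: increasing `y` in `[0, L]ⁿ` whose `n - 1` gaps are all `≤ r`. By
inclusion–exclusion over the set `S` of gaps exceeding `r`, it suffices to measure the increasing
`y` in `[0, L]ⁿ` whose gaps indexed by `S` exceed `r`; shrinking each of those gaps by `r` is a
translation onto the increasing tuples of `[0, L - |S| r]ⁿ`, of volume `(L - |S| r)₊ⁿ / n!`.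
-/

open MeasureTheory Set
open scoped ENNReal

theorem MeasureTheory.measureReal_biInter_compl_eq_sum_powerset {α ι : Type*}
    [MeasurableSpace α] (μ : Measure α) [IsFiniteMeasure μ] {t : Finset ι} {s : ι → Set α}
    (hs : ∀ i ∈ t, MeasurableSet (s i)) :
    μ.real (⋂ i ∈ t, (s i)ᶜ)
      = ∑ u ∈ t.powerset, (-1 : ℝ) ^ u.card * μ.real (⋂ i ∈ u, s i) := by
  classical
  rw [← Finset.sum_filter_add_sum_filter_not _ fun u => u.Nonempty, ← Set.compl_iUnion₂,
    measureReal_compl (Finset.measurableSet_biUnion _ hs),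
    measureReal_biUnion_eq_sum_powerset hs]
  simp only [pow_succ, mul_neg, mul_one, neg_mul, Finset.sum_neg_distrib, sub_neg_eq_add,
    Finset.not_nonempty_iff_eq_empty, Finset.filter_eq', Finset.mem_powerset, Finset.empty_subset,
    ↓reduceIte, Finset.sum_singleton, Finset.card_empty, pow_zero, Finset.notMem_empty,
    Set.iInter_of_empty, Set.iInter_univ, one_mul]
  ring

theorem MeasureTheory.Measure.pi_const_smul {ι α : Type*} [Fintype ι] [MeasurableSpace α]
    (μ : Measure α) [SigmaFinite μ] {c : ℝ≥0∞} (hc : c ≠ ∞) :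
    Measure.pi (fun _ : ι => c • μ) = c ^ Fintype.card ι • Measure.pi (fun _ : ι => μ) := by
  lift c to NNReal using hc
  have : SigmaFinite ((c : ℝ≥0∞) • μ) := inferInstanceAs (SigmaFinite (c • μ))
  refine Measure.pi_eq fun s hs => ?_
  simp [Measure.pi_pi, Finset.prod_mul_distrib]

namespace ConnectivityProb

variable {n : ℕ}

theorem volume_setOf_not_injective :
    volume {x : Fin n → ℝ | ¬ Function.Injective x} = 0 := by
  have hsub : {x : Fin n → ℝ | ¬ Function.Injective x} ⊆
      ⋃ (i : Fin n) (j : Fin n) (_ : i ≠ j),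
        (LinearMap.ker (LinearMap.proj (R := ℝ) (ι := Fin n) (φ := fun _ => ℝ) i
          - LinearMap.proj j) : Set (Fin n → ℝ)) := by
    intro x hx
    simp only [Function.Injective, not_forall] at hx
    obtain ⟨i, j, hxij, hij⟩ := hx
    simp only [mem_iUnion]
    exact ⟨i, j, hij, by simp [hxij]⟩
  refine measure_mono_null hsub (measure_iUnion_null fun i => measure_iUnion_null fun j =>
    measure_iUnion_null fun hij => Measure.addHaar_submodule _ _ fun htop => ?_)
  have := LinearMap.ker_eq_top.1 htop
  simpa [hij] using LinearMap.congr_fun this (Pi.single i 1)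

theorem measurePreserving_comp_perm (σ : Equiv.Perm (Fin n)) :
    MeasurePreserving (fun x : Fin n → ℝ => x ∘ σ) := by
  have : (fun x : Fin n → ℝ => x ∘ σ)
      = MeasurableEquiv.piCongrLeft (fun _ => ℝ) σ.symm := by
    funext x i
    simp [MeasurableEquiv.coe_piCongrLeft, Equiv.piCongrLeft_apply]
  rw [this]
  exact volume_measurePreserving_piCongrLeft (fun _ => ℝ) σ.symm

theorem measurableSet_setOf_strictMono : MeasurableSet {y : Fin n → ℝ | StrictMono y} := by
  have : {y : Fin n → ℝ | StrictMono y}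
      = ⋂ (i : Fin n) (j : Fin n) (_ : i < j), {y | y i < y j} := by
    ext y
    simp [StrictMono]
  rw [this]
  exact .iInter fun i => .iInter fun j => .iInter fun _ =>
    measurableSet_lt (measurable_pi_apply i) (measurable_pi_apply j)

theorem comp_sort_eq_of_strictMono {α : Type*} [LinearOrder α] {x : Fin n → α}
    {σ : Equiv.Perm (Fin n)} (h : StrictMono (x ∘ σ)) : x ∘ Tuple.sort x = x ∘ σ :=
  (Tuple.comp_sort_eq_comp_iff_monotone.2 h.monotone).symm

theorem volume_setOf_comp_sort_mem {A : Set (Fin n → ℝ)} (hA : MeasurableSet A) :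
    volume {x : Fin n → ℝ | x ∘ Tuple.sort x ∈ A}
      = n.factorial * volume (A ∩ {y | StrictMono y}) := by
  set P : Equiv.Perm (Fin n) → Set (Fin n → ℝ) :=
    fun σ => (fun x => x ∘ σ) ⁻¹' (A ∩ {y | StrictMono y})
  have hP : ∀ σ, MeasurableSet (P σ) := fun σ =>
    (measurePreserving_comp_perm σ).measurable (hA.inter measurableSet_setOf_strictMono)
  have hsub : ⋃ σ, P σ ⊆ {x | x ∘ Tuple.sort x ∈ A} := by
    simp only [iUnion_subset_iff]
    rintro σ x ⟨hxA, hx⟩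
    show x ∘ Tuple.sort x ∈ A
    rwa [comp_sort_eq_of_strictMono hx]
  have hcover : {x | x ∘ Tuple.sort x ∈ A} ⊆ (⋃ σ, P σ) ∪ {x | ¬ Function.Injective x} := by
    intro x hxA
    by_cases hx : Function.Injective x
    · refine Or.inl (mem_iUnion.2 ⟨Tuple.sort x, hxA, ?_⟩)
      exact (Tuple.monotone_sort x).strictMono_of_injective (hx.comp (Equiv.injective _))
    · exact Or.inr hx
  have hdisj : Pairwise (Function.onFun Disjoint P) := by
    intro σ τ hστ
    refine Set.disjoint_left.2 fun x hσ hτ => hστ ?_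
    have hinj : Function.Injective x := by
      simpa using hσ.2.injective.comp (Equiv.injective σ.symm)
    ext i
    exact congrArg Fin.val (hinj (congrFun ((comp_sort_eq_of_strictMono hσ.2).symm.trans
      (comp_sort_eq_of_strictMono hτ.2)) i))
  calc volume {x | x ∘ Tuple.sort x ∈ A}
      = volume (⋃ σ, P σ) := by
        refine le_antisymm ((measure_mono hcover).trans ((measure_union_le _ _).trans ?_))
          (measure_mono hsub)
        rw [volume_setOf_not_injective, add_zero]
    _ = ∑ σ, volume (P σ) := by rw [measure_iUnion hdisj hP, tsum_fintype]
    _ = n.factorial * volume (A ∩ {y | StrictMono y}) := by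
        simp only [P, (measurePreserving_comp_perm _).measure_preimage
          (hA.inter measurableSet_setOf_strictMono).nullMeasurableSet]
        simp [Fintype.card_perm]

def orderedSimplex (n : ℕ) (c : ℝ) : Set (Fin n → ℝ) :=
  univ.pi (fun _ => Icc 0 c) ∩ {y | StrictMono y}

theorem measurableSet_orderedSimplex (c : ℝ) : MeasurableSet (orderedSimplex n c) :=
  (MeasurableSet.univ_pi fun _ => measurableSet_Icc).inter measurableSet_setOf_strictMono

theorem comp_perm_mem_univ_pi_iff {α : Type*} {s : Set α} (σ : Equiv.Perm (Fin n))
    (x : Fin n → α) : x ∘ σ ∈ univ.pi (fun _ => s) ↔ x ∈ univ.pi (fun _ => s) := by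
  simp only [mem_univ_pi, Function.comp_apply]
  exact ⟨fun h i => by simpa using h (σ.symm i), fun h i => h (σ i)⟩

theorem factorial_mul_volume_orderedSimplex (c : ℝ) :
    n.factorial * volume (orderedSimplex n c) = ENNReal.ofReal c ^ n := by
  have hbox : {x : Fin n → ℝ | x ∘ Tuple.sort x ∈ univ.pi (fun _ => Icc 0 c)}
      = univ.pi (fun _ => Icc 0 c) := by
    ext x
    exact comp_perm_mem_univ_pi_iff _ x
  rw [orderedSimplex, ← volume_setOf_comp_sort_mem (.univ_pi fun _ => measurableSet_Icc),
    hbox, volume_pi_pi]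
  simp [Real.volume_Icc]

theorem factorial_mul_volumeReal_orderedSimplex (c : ℝ) :
    n.factorial * volume.real (orderedSimplex n c) = max c 0 ^ n := by
  rw [measureReal_def, ← ENNReal.toReal_natCast, ← ENNReal.toReal_mul,
    factorial_mul_volume_orderedSimplex, ENNReal.toReal_pow, ENNReal.toReal_ofReal']

variable {m : ℕ}

theorem mem_orderedSimplex_iff {c : ℝ} {y : Fin (m + 1) → ℝ} :
    y ∈ orderedSimplex (m + 1) c ↔ StrictMono y ∧ 0 ≤ y 0 ∧ y (Fin.last m) ≤ c := by
  simp only [orderedSimplex, mem_inter_iff, mem_univ_pi, mem_Icc, mem_ofPred_eq]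
  constructor
  · rintro ⟨hbox, hy⟩
    exact ⟨hy, (hbox 0).1, (hbox _).2⟩
  · rintro ⟨hy, h0, hlast⟩
    exact ⟨fun i => ⟨h0.trans (hy.monotone (Fin.zero_le i)),
      (hy.monotone (Fin.le_last i)).trans hlast⟩, hy⟩

def gapExceeds (r : ℝ) (i : Fin m) : Set (Fin (m + 1) → ℝ) :=
  {x | r < x i.succ - x i.castSucc}

theorem measurableSet_gapExceeds (r : ℝ) (i : Fin m) : MeasurableSet (gapExceeds r i) :=
  measurableSet_lt measurable_const (by fun_prop)

def gapShift (r : ℝ) (S : Finset (Fin m)) (k : Fin (m + 1)) : ℝ :=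
  r * (S.filter fun i => i.castSucc < k).card

theorem gapShift_zero (r : ℝ) (S : Finset (Fin m)) : gapShift r S 0 = 0 := by
  simp [gapShift]

theorem gapShift_last (r : ℝ) (S : Finset (Fin m)) :
    gapShift r S (Fin.last m) = r * S.card := by
  simp [gapShift, Fin.castSucc_lt_last]

theorem gapShift_succ (r : ℝ) (S : Finset (Fin m)) (i : Fin m) :
    gapShift r S i.succ = gapShift r S i.castSucc + if i ∈ S then r else 0 := by
  have hsplit : (S.filter fun j => j.castSucc < i.succ)
      = (S.filter fun j => j.castSucc < i.castSucc) ∪ S.filter fun j => j = i := by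
    ext j
    simp only [Finset.mem_filter, Finset.mem_union, Fin.castSucc_lt_succ_iff,
      Fin.castSucc_lt_castSucc_iff, le_iff_lt_or_eq]
    tauto
  have hdisj :
      Disjoint (S.filter fun j => j.castSucc < i.castSucc) (S.filter fun j => j = i) := by
    simp only [Finset.disjoint_filter, Fin.castSucc_lt_castSucc_iff]
    exact fun j _ hj => hj.ne
  rw [gapShift, gapShift, hsplit, Finset.card_union_of_disjoint hdisj, Finset.filter_eq']
  split_ifs <;> simp [mul_add]

theorem strictMono_add_gapShift_iff {r : ℝ} (hr : 0 < r) (S : Finset (Fin m))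
    (y : Fin (m + 1) → ℝ) :
    (StrictMono (y + gapShift r S) ∧ y + gapShift r S ∈ ⋂ i ∈ S, gapExceeds r i)
      ↔ StrictMono y := by
  have hgap : ∀ i : Fin m, (y + gapShift r S) i.succ - (y + gapShift r S) i.castSucc
      = y i.succ - y i.castSucc + if i ∈ S then r else 0 := by
    intro i
    simp only [Pi.add_apply, gapShift_succ]
    ring
  simp only [Fin.strictMono_iff_lt_succ, mem_iInter, gapExceeds, mem_ofPred_eq]
  constructor
  · rintro ⟨hmono, hwide⟩ i
    have h := hgap i
    by_cases hi : i ∈ S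
    · have := hwide i hi
      rw [if_pos hi] at h
      linarith
    · have := hmono i
      rw [if_neg hi] at h
      linarith
  · intro hmono
    refine ⟨fun i => ?_, fun i hi => ?_⟩
    · have := hmono i
      have := hgap i
      split_ifs at this <;> linarith
    · have := hmono i
      have := hgap i
      rw [if_pos hi] at this
      linarith

theorem add_gapShift_preimage {r : ℝ} (hr : 0 < r) (L : ℝ) (S : Finset (Fin m)) :
    (· + gapShift r S) ⁻¹' (orderedSimplex (m + 1) L ∩ ⋂ i ∈ S, gapExceeds r i)
      = orderedSimplex (m + 1) (L - S.card * r) := by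
  ext y
  rw [mem_preimage, mem_inter_iff, mem_orderedSimplex_iff, mem_orderedSimplex_iff,
    ← strictMono_add_gapShift_iff hr S y]
  simp only [Pi.add_apply, gapShift_zero, gapShift_last, add_zero]
  constructor
  · rintro ⟨⟨hmono, h0, hlast⟩, hwide⟩
    exact ⟨⟨hmono, hwide⟩, h0, by linarith⟩
  · rintro ⟨⟨hmono, hwide⟩, h0, hlast⟩
    exact ⟨⟨hmono, h0, by linarith⟩, hwide⟩

theorem volumeReal_orderedSimplex_inter_gapExceeds {r : ℝ} (hr : 0 < r) (L : ℝ)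
    (S : Finset (Fin m)) :
    volume.real (orderedSimplex (m + 1) L ∩ ⋂ i ∈ S, gapExceeds r i)
      = volume.real (orderedSimplex (m + 1) (L - S.card * r)) := by
  simp only [measureReal_def]
  rw [← add_gapShift_preimage hr L S, measure_preimage_add_right]

theorem setOf_consecutive_le_eq_iInter (r : ℝ) :
    {y : Fin (m + 1) → ℝ | ∀ i j : Fin (m + 1), (i : ℕ) + 1 = (j : ℕ) → y j - y i ≤ r}
      = ⋂ i ∈ (Finset.univ : Finset (Fin m)), (gapExceeds r i)ᶜ := by
  ext y
  simp only [mem_ofPred_eq, mem_iInter, mem_compl_iff, gapExceeds, Finset.mem_univ, forall_const,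
    not_lt]
  refine ⟨fun h i => h _ _ (by simp), fun h i j hij => ?_⟩
  obtain ⟨k, rfl⟩ : ∃ k : Fin m, k.castSucc = i := Fin.exists_castSucc_eq.2 fun hi => by
    have := j.isLt
    rw [hi, Fin.val_last] at hij
    omega
  obtain rfl : j = k.succ := Fin.ext (by simp [← hij])
  exact h k

variable {r : ℝ}

theorem volumeReal_consecutive_le_inter_box (hr : 0 < r) (L : ℝ) :
    volume.real ({x : Fin (m + 1) → ℝ | ∀ i j : Fin (m + 1), (i : ℕ) + 1 = (j : ℕ) →
        x (Tuple.sort x j) - x (Tuple.sort x i) ≤ r} ∩ univ.pi (fun _ => Icc 0 L))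
      = ∑ k ∈ Finset.range (m + 1),
          (-1 : ℝ) ^ k * (m.choose k : ℝ) * max (L - k * r) 0 ^ (m + 1) := by
  set box : Set (Fin (m + 1) → ℝ) := univ.pi fun _ => Icc 0 L
  have hG := setOf_consecutive_le_eq_iInter (m := m) r
  set gapsLe := ⋂ i ∈ (Finset.univ : Finset (Fin m)), (gapExceeds r i)ᶜ
  have hsort : {x : Fin (m + 1) → ℝ | ∀ i j : Fin (m + 1), (i : ℕ) + 1 = (j : ℕ) →
        x (Tuple.sort x j) - x (Tuple.sort x i) ≤ r} ∩ box
      = {x | x ∘ Tuple.sort x ∈ gapsLe ∩ box} := by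
    ext x
    exact and_congr (by rw [← hG]; rfl) (comp_perm_mem_univ_pi_iff _ x).symm
  have hmeas : MeasurableSet (gapsLe ∩ box) :=
    (MeasurableSet.biInter (Finset.countable_toSet _) fun i _ =>
      (measurableSet_gapExceeds r i).compl).inter (.univ_pi fun _ => measurableSet_Icc)
  have : IsFiniteMeasure (volume.restrict (orderedSimplex (m + 1) L)) :=
    isFiniteMeasure_restrict.2 (ne_top_of_le_ne_top
      (isCompact_univ_pi fun _ => isCompact_Icc).measure_ne_top (measure_mono inter_subset_left))
  calc _ = (m + 1).factorial * (volume.restrict (orderedSimplex (m + 1) L)).real gapsLe := by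
        rw [hsort, measureReal_def, volume_setOf_comp_sort_mem hmeas, ENNReal.toReal_mul,
          ENNReal.toReal_natCast, measureReal_restrict_apply' (measurableSet_orderedSimplex L),
          orderedSimplex, measureReal_def, inter_assoc]
    _ = ∑ u ∈ (Finset.univ : Finset (Fin m)).powerset, (-1 : ℝ) ^ u.card *
          ((m + 1).factorial * volume.real (orderedSimplex (m + 1) (L - u.card * r))) := by
        rw [measureReal_biInter_compl_eq_sum_powerset _ fun i _ => measurableSet_gapExceeds r i,
          Finset.mul_sum]
        refine Finset.sum_congr rfl fun u _ => ?_
        rw [measureReal_restrict_apply' (measurableSet_orderedSimplex L), inter_comm,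
          volumeReal_orderedSimplex_inter_gapExceeds hr]
        ring
    _ = _ := by
        simp only [factorial_mul_volumeReal_orderedSimplex]
        rw [Finset.sum_powerset_apply_card (fun k => (-1 : ℝ) ^ k * max (L - k * r) 0 ^ (m + 1))]
        simp [nsmul_eq_mul, mul_assoc, mul_left_comm]

theorem pi_uniform_Icc_apply {L : ℝ} (hL : 0 < L) (S : Set (Fin n → ℝ)) :
    Measure.pi (fun _ : Fin n => (ENNReal.ofReal L)⁻¹ • volume.restrict (Icc 0 L)) S
      = (ENNReal.ofReal L)⁻¹ ^ n * volume (S ∩ univ.pi fun _ => Icc 0 L) := by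
  rw [Measure.pi_const_smul _ (ENNReal.inv_ne_top.2 (ENNReal.ofReal_pos.2 hL).ne'),
    ← Measure.restrict_pi_pi, Measure.smul_apply,
    Measure.restrict_apply' (.univ_pi fun _ => measurableSet_Icc), Fintype.card_fin, smul_eq_mul,
    ← volume_pi]

theorem inv_pow_mul_sum_max_pow {L : ℝ} (hL : 0 < L) (hr : 0 < r) :
    L⁻¹ ^ (m + 1) * ∑ k ∈ Finset.range (m + 1),
        (-1 : ℝ) ^ k * (m.choose k : ℝ) * max (L - k * r) 0 ^ (m + 1)
      = ∑ k ∈ Finset.range (min m ⌊L / r⌋₊ + 1),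
          (-1 : ℝ) ^ k * (m.choose k : ℝ) * (1 - k * r / L) ^ (m + 1) := by
  have hfloor : ∀ k : ℕ, k ≤ ⌊L / r⌋₊ ↔ k * r ≤ L := fun k => by
    rw [Nat.le_floor_iff (div_pos hL hr).le, le_div_iff₀ hr]
  rw [Finset.mul_sum]
  refine (Finset.sum_subset (Finset.range_subset_range.2 (by omega))
    fun k hkm hk => ?_).symm.trans (Finset.sum_congr rfl fun k hk => ?_)
  · have hkL : L < k * r := by
      rw [← not_le, ← hfloor]
      simp only [Finset.mem_range] at hkm hk
      omega
    rw [max_eq_right (by linarith), zero_pow (Nat.succ_ne_zero m), mul_zero, mul_zero]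
  · have hkL : k * r ≤ L := (hfloor k).1 (by simp only [Finset.mem_range] at hk; omega)
    rw [max_eq_left (by linarith), one_sub_div hL.ne', div_pow, div_eq_mul_inv _ (L ^ _),
      inv_pow]
    ring

end ConnectivityProb

/-- For `n ≥ 1`, `L, r > 0` and `X_1, …, X_n` i.i.d. uniform on `[0, L]`,
the probability that the random geometric graph `G(n, L)` (edge iff distance `≤ r`) is
connected — equivalently, that every gap between consecutive order statistics of the
sample is at most `r` — equals `∑_{i=0}^{k₁} (-1)^i C(n-1, i) (1 - i r / L)^n`
with `k₁ = min (n-1) ⌊L/r⌋`. -/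
theorem connectivity_prob_one_dim (n : ℕ) (hn : 1 ≤ n) (L r : ℝ)
    (hL : 0 < L) (hr : 0 < r) :
    ((Measure.pi fun _ : Fin n =>
        (ENNReal.ofReal L)⁻¹ • volume.restrict (Set.Icc (0 : ℝ) L))
      {x : Fin n → ℝ | ∀ i j : Fin n, (i : ℕ) + 1 = (j : ℕ) →
          x (Tuple.sort x j) - x (Tuple.sort x i) ≤ r}).toReal
      = ∑ i ∈ Finset.range (min (n - 1) ⌊L / r⌋₊ + 1),
          (-1 : ℝ) ^ i * ((n - 1).choose i : ℝ) * (1 - (i : ℝ) * r / L) ^ n := by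
  obtain ⟨m, rfl⟩ : ∃ m, n = m + 1 := ⟨n - 1, by omega⟩
  rw [ConnectivityProb.pi_uniform_Icc_apply hL, ENNReal.toReal_mul, ← measureReal_def,
    ConnectivityProb.volumeReal_consecutive_le_inter_box hr, ENNReal.toReal_pow,
    ENNReal.toReal_inv, ENNReal.toReal_ofReal hL.le, Nat.add_sub_cancel,
    ConnectivityProb.inv_pow_mul_sum_max_pow hL hr]
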